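/- arXiv:2103.03978 — 3 statements merged into one kernel-verified Lean document; each statement's English description precedes it below -/
import Mathlib

section
/- Gentle operator lemma: if ρ is a density operator and Π is a projection with tr(Πρ) ≥ 1 − ε for some ε ∈ [0,1], then ‖ρ − ΠρΠ‖₁ ≤ 2√ε. -/
open scoped ComplexOrder

noncomputable def traceNorm {d : ℕ} (A : Matrix (Fin d) (Fin d) ℂ) : ℝ :=
  ((Matrix.posSemidef_conjTranspose_mul_self A).1.eigenvectorUnitary.1 *
    Matrix.diagonal (((↑) : ℝ → ℂ) ∘ Real.sqrt ∘ (Matrix.posSemidef_conjTranspose_mul_self A).1.eigenvalues) *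
    (star (Matrix.posSemidef_conjTranspose_mul_self A).1.eigenvectorUnitary :
      Matrix (Fin d) (Fin d) ℂ)).trace.re

set_option linter.unusedSectionVars false
set_option maxHeartbeats 1000000

open Matrix

namespace GentleAux


variable {n : Type*} [Fintype n] [DecidableEq n]

lemma trace_ctm_re (A : Matrix n n ℂ) :
    (Aᴴ * A).trace.re = ∑ i, ∑ k, Complex.normSq (A k i) := by
  simp only [Matrix.trace, Matrix.diag, Matrix.mul_apply, Matrix.conjTranspose_apply,
    Complex.re_sum]
  refine Finset.sum_congr rfl fun i _ => Finset.sum_congr rfl fun k _ => ?_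
  simp [Complex.mul_re, Complex.normSq_apply]

lemma trace_ctm_re_nonneg (A : Matrix n n ℂ) : 0 ≤ (Aᴴ * A).trace.re := by
  rw [trace_ctm_re]
  exact Finset.sum_nonneg fun i _ => Finset.sum_nonneg fun k _ => Complex.normSq_nonneg _

lemma sum_cs {ι : Type*} [Fintype ι] (f g : ι → ℝ) (hf : ∀ i, 0 ≤ f i) (hg : ∀ i, 0 ≤ g i) :
    ∑ i, f i * g i ≤ Real.sqrt (∑ i, f i ^ 2) * Real.sqrt (∑ i, g i ^ 2) := by
  rw [← Real.sqrt_mul (by positivity)]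
  rw [show (∑ i, f i * g i) = Real.sqrt ((∑ i, f i * g i) ^ 2) by
    rw [Real.sqrt_sq (Finset.sum_nonneg fun i _ => mul_nonneg (hf i) (hg i))]]
  exact Real.sqrt_le_sqrt (Finset.sum_mul_sq_le_sq_mul_sq _ _ _)

lemma cs (A B : Matrix n n ℂ) :
    (Aᴴ * B).trace.re ≤ Real.sqrt ((Aᴴ * A).trace.re) * Real.sqrt ((Bᴴ * B).trace.re) := by
  have h1 : (Aᴴ * B).trace.re ≤ ∑ i, ∑ k, ‖A k i‖ * ‖B k i‖ := by
    simp only [Matrix.trace, Matrix.diag, Matrix.mul_apply, Matrix.conjTranspose_apply,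
      Complex.re_sum]
    refine Finset.sum_le_sum fun i _ => Finset.sum_le_sum fun k _ => ?_
    calc (star (A k i) * B k i).re ≤ ‖star (A k i) * B k i‖ :=
          Complex.re_le_norm _
      _ = ‖A k i‖ * ‖B k i‖ := by
          rw [norm_mul]
          simp
  refine h1.trans ?_
  rw [trace_ctm_re A, trace_ctm_re B]
  have := sum_cs (ι := n × n) (fun p => ‖A p.2 p.1‖) (fun p => ‖B p.2 p.1‖)
    (fun p => norm_nonneg _) (fun p => norm_nonneg _)
  simp only [Fintype.sum_prod_type, Complex.sq_norm] at this
  exact this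

lemma proj_bound (A R : Matrix n n ℂ) (hR : Rᴴ = R) (hR2 : R * R = R) :
    ((Aᴴ * A) * R).trace.re ≤ (Aᴴ * A).trace.re := by
  have expand : (A - A * R)ᴴ * (A - A * R) =
      Aᴴ * A - Aᴴ * A * R - R * (Aᴴ * A) + R * (Aᴴ * A) * R := by
    rw [conjTranspose_sub, conjTranspose_mul, hR]
    noncomm_ring
  have key : ((A - A * R)ᴴ * (A - A * R)).trace = (Aᴴ * A).trace - ((Aᴴ * A) * R).trace := by
    rw [expand]
    rw [trace_add, trace_sub, trace_sub]
    rw [trace_mul_comm R (Aᴴ * A)]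
    rw [trace_mul_cycle R (Aᴴ * A) R, hR2, trace_mul_comm R (Aᴴ * A)]
    ring
  have h0 := trace_ctm_re_nonneg (A - A * R)
  rw [key, Complex.sub_re] at h0
  linarith

lemma main_bound (X Y W V : Matrix n n ℂ)
    (hW : (W * Wᴴ) * (W * Wᴴ) = W * Wᴴ) (hV : V * Vᴴ = 1) :
    (Wᴴ * (Xᴴ * Y) * V).trace.re ≤
      Real.sqrt ((Xᴴ * X).trace.re) * Real.sqrt ((Yᴴ * Y).trace.re) := by
  have e1 : Wᴴ * (Xᴴ * Y) * V = (X * W)ᴴ * (Y * V) := by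
    rw [conjTranspose_mul]; noncomm_ring
  have ha : ((X * W)ᴴ * (X * W)).trace.re ≤ (Xᴴ * X).trace.re := by
    have e2 : ((X * W)ᴴ * (X * W)).trace = ((Xᴴ * X) * (W * Wᴴ)).trace := by
      rw [conjTranspose_mul,
        show (Wᴴ * Xᴴ) * (X * W) = Wᴴ * ((Xᴴ * X) * W) by noncomm_ring,
        trace_mul_comm,
        show (Xᴴ * X * W) * Wᴴ = (Xᴴ * X) * (W * Wᴴ) by noncomm_ring]
    rw [e2]
    exact proj_bound X (W * Wᴴ) (by simp) hW
  have hb : ((Y * V)ᴴ * (Y * V)).trace = (Yᴴ * Y).trace := by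
    rw [conjTranspose_mul,
      show (Vᴴ * Yᴴ) * (Y * V) = Vᴴ * ((Yᴴ * Y) * V) by noncomm_ring,
      trace_mul_comm,
      show (Yᴴ * Y * V) * Vᴴ = (Yᴴ * Y) * (V * Vᴴ) by noncomm_ring, hV, mul_one]
  rw [e1]
  refine (cs _ _).trans ?_
  rw [hb]
  exact mul_le_mul_of_nonneg_right (Real.sqrt_le_sqrt ha) (Real.sqrt_nonneg _)

lemma key_lemma (M U : Matrix n n ℂ) (lam : n → ℝ) (hlam : ∀ i, 0 ≤ lam i)
    (hU : Uᴴ * U = 1) (hU' : U * Uᴴ = 1)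
    (hsp : Mᴴ * M = U * diagonal (fun i => (lam i : ℂ)) * Uᴴ)
    (X1 Y1 X2 Y2 : Matrix n n ℂ) (hdec : M = X1ᴴ * Y1 + X2ᴴ * Y2) :
    ∑ i, Real.sqrt (lam i) ≤
      Real.sqrt ((X1ᴴ * X1).trace.re) * Real.sqrt ((Y1ᴴ * Y1).trace.re) +
      Real.sqrt ((X2ᴴ * X2).trace.re) * Real.sqrt ((Y2ᴴ * Y2).trace.re) := by
  set sig : n → ℝ := fun i => Real.sqrt (lam i) with hsigdef
  set c : n → ℂ := fun i => ((sig i)⁻¹ : ℝ) with hcdef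
  set N : Matrix n n ℂ := M * U with hNdef
  set W : Matrix n n ℂ := N * diagonal c with hWdef
  have hNN : Nᴴ * N = diagonal (fun i => (lam i : ℂ)) := by
    have h1 : Nᴴ * N = Uᴴ * (Mᴴ * M) * U := by rw [hNdef, conjTranspose_mul]; noncomm_ring
    rw [h1, hsp, show Uᴴ * (U * diagonal (fun i => (lam i : ℂ)) * Uᴴ) * U
        = (Uᴴ * U) * diagonal (fun i => (lam i : ℂ)) * (Uᴴ * U) by noncomm_ring, hU,
      one_mul, mul_one]
  have hcol : ∀ j, ∑ k, Complex.normSq (N k j) = lam j := by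
    intro j
    have h := congrFun (congrFun hNN j) j
    simp only [Matrix.mul_apply, Matrix.diagonal_apply_eq, Matrix.conjTranspose_apply] at h
    have h2 := congrArg Complex.re h
    simpa [Complex.re_sum, Complex.mul_re, Complex.normSq_apply] using h2
  have hN0 : ∀ j, lam j = 0 → ∀ k, N k j = 0 := by
    intro j hj k
    have h := hcol j
    rw [hj] at h
    have h0 : Complex.normSq (N k j) = 0 :=
      le_antisymm (h ▸ Finset.single_le_sum
        (fun x _ => Complex.normSq_nonneg (N x j)) (Finset.mem_univ k))
        (Complex.normSq_nonneg _)
    exact Complex.normSq_eq_zero.mp h0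
  have hstarc : star c = c := by
    funext i
    simp [hcdef]
  have hWc : Wᴴ = diagonal c * Nᴴ := by
    rw [hWdef, conjTranspose_mul, diagonal_conjTranspose, hstarc]
  have hWN : Wᴴ * N = diagonal (fun i => c i * (lam i : ℂ)) := by
    rw [hWc, Matrix.mul_assoc, hNN, diagonal_mul_diagonal]
  have hWW : Wᴴ * W = diagonal (fun i => c i * ((lam i : ℂ) * c i)) := by
    rw [hWc, hWdef, show diagonal c * Nᴴ * (N * diagonal c)
        = diagonal c * ((Nᴴ * N) * diagonal c) by noncomm_ring, hNN,
      diagonal_mul_diagonal, diagonal_mul_diagonal]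
  have hWe : W * (Wᴴ * W) = W := by
    rw [hWW, hWdef, Matrix.mul_assoc, diagonal_mul_diagonal]
    ext k j
    rw [Matrix.mul_diagonal, Matrix.mul_diagonal]
    rcases eq_or_ne (lam j) 0 with h0 | h0
    · rw [hN0 j h0 k, zero_mul, zero_mul]
    · have hlpos : 0 < lam j := lt_of_le_of_ne (hlam j) (Ne.symm h0)
      have hspos : 0 < sig j := Real.sqrt_pos.mpr hlpos
      have hs0 : (sig j : ℂ) ≠ 0 := by
        simpa using hspos.ne'
      have hl : (lam j : ℂ) = (sig j : ℂ) * (sig j : ℂ) := by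
        norm_cast
        exact (Real.mul_self_sqrt (hlam j)).symm
      congr 1
      rw [hcdef]
      simp only []
      rw [hl, Complex.ofReal_inv]
      field_simp
  have hproj : (W * Wᴴ) * (W * Wᴴ) = W * Wᴴ := by
    calc (W * Wᴴ) * (W * Wᴴ) = (W * (Wᴴ * W)) * Wᴴ := by noncomm_ring
    _ = W * Wᴴ := by rw [hWe]
  have hreal : ∀ i, (sig i)⁻¹ * lam i = sig i := by
    intro i
    rcases eq_or_lt_of_le (hlam i) with h0 | hpos
    · simp [hsigdef, ← h0]
    · have hs : sig i ≠ 0 := (Real.sqrt_pos.mpr hpos).ne'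
      have h2 : lam i = sig i * sig i := (Real.mul_self_sqrt (hlam i)).symm
      rw [h2]
      field_simp
  have htr : (Wᴴ * N).trace.re = ∑ i, sig i := by
    rw [hWN, trace_diagonal, Complex.re_sum]
    refine Finset.sum_congr rfl fun i _ => ?_
    rw [hcdef]
    simp only []
    rw [← Complex.ofReal_mul, Complex.ofReal_re]
    exact hreal i
  have hsplit : Wᴴ * N = Wᴴ * (X1ᴴ * Y1) * U + Wᴴ * (X2ᴴ * Y2) * U := by
    rw [hNdef, hdec]; noncomm_ring
  calc ∑ i, sig i = (Wᴴ * N).trace.re := htr.symm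
    _ = (Wᴴ * (X1ᴴ * Y1) * U).trace.re + (Wᴴ * (X2ᴴ * Y2) * U).trace.re := by
        rw [hsplit, trace_add, Complex.add_re]
    _ ≤ _ := add_le_add (main_bound X1 Y1 W U hproj hU') (main_bound X2 Y2 W U hproj hU')

end GentleAux

open Matrix in
set_option maxHeartbeats 1000000 in
/-- Gentle operator lemma: if `tr(Pρ) ≥ 1 - ε` for a projection `P`,
then `‖ρ - PρP‖₁ ≤ 2√ε`. -/
theorem gentle_operator {d : ℕ} (ρ P : Matrix (Fin d) (Fin d) ℂ) (ε : ℝ)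
    (hρ : ρ.PosSemidef) (hρ1 : ρ.trace = 1)
    (hPh : P.IsHermitian) (hPp : P * P = P)
    (hε : ε ∈ Set.Icc (0:ℝ) 1)
    (h : 1 - ε ≤ (P * ρ).trace.re) :
    traceNorm (ρ - P * ρ * P) ≤ 2 * Real.sqrt ε := by
  have hε0 : 0 ≤ ε := hε.1
  set Q : Matrix (Fin d) (Fin d) ℂ := 1 - P with hQdef
  obtain ⟨S, hS, hSS⟩ : ∃ S : Matrix (Fin d) (Fin d) ℂ, Sᴴ = S ∧ S * S = ρ := by
    open scoped MatrixOrder in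
    exact ⟨CFC.sqrt ρ, (CFC.sqrt_nonneg ρ).posSemidef.1, CFC.sqrt_mul_sqrt_self ρ hρ.nonneg⟩
  have hQh : Qᴴ = Q := by rw [hQdef, conjTranspose_sub, conjTranspose_one, hPh.eq]
  have hQ2 : Q * Q = Q := by
    rw [hQdef]
    simp only [mul_sub, sub_mul, one_mul, mul_one, hPp]
    abel
  have hdec : ρ - P * ρ * P = (S * Q)ᴴ * S + (S * P)ᴴ * (S * Q) := by
    rw [conjTranspose_mul, conjTranspose_mul, hS, hQh, hPh.eq,
      show Q * S * S = Q * (S * S) by rw [Matrix.mul_assoc],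
      show P * S * (S * Q) = P * (S * S) * Q by noncomm_ring, hSS, hQdef]
    noncomm_ring
  have htQ : ((S * Q)ᴴ * (S * Q)).trace = (ρ * Q).trace := by
    rw [conjTranspose_mul, hS, hQh,
      show Q * S * (S * Q) = Q * ((S * S) * Q) by noncomm_ring, hSS, trace_mul_comm,
      show ρ * Q * Q = ρ * (Q * Q) by rw [Matrix.mul_assoc], hQ2]
  have htP : ((S * P)ᴴ * (S * P)).trace = (ρ * P).trace := by
    rw [conjTranspose_mul, hS, hPh.eq,
      show P * S * (S * P) = P * ((S * S) * P) by noncomm_ring, hSS, trace_mul_comm,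
      show ρ * P * P = ρ * (P * P) by rw [Matrix.mul_assoc], hPp]
  have hQtr : (ρ * Q).trace = 1 - (P * ρ).trace := by
    rw [hQdef, mul_sub, mul_one, trace_sub, hρ1, trace_mul_comm]
  have hQnn : 0 ≤ (ρ * Q).trace.re := htQ ▸ GentleAux.trace_ctm_re_nonneg (S * Q)
  have hQle : (ρ * Q).trace.re ≤ ε := by
    rw [hQtr, Complex.sub_re, Complex.one_re]; linarith
  have hPle : (ρ * P).trace.re ≤ 1 := by
    have hP' : (ρ * P).trace = 1 - (ρ * Q).trace := by
      rw [hQtr, trace_mul_comm]; ring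
    rw [hP', Complex.sub_re, Complex.one_re]; linarith
  have hStr : (Sᴴ * S).trace.re = 1 := by rw [hS, hSS, hρ1]; simp
  set M : Matrix (Fin d) (Fin d) ℂ := ρ - P * ρ * P with hM
  have hpsd : (Mᴴ * M).PosSemidef := Matrix.posSemidef_conjTranspose_mul_self M
  set U : Matrix (Fin d) (Fin d) ℂ := (hpsd.1.eigenvectorUnitary : Matrix (Fin d) (Fin d) ℂ)
    with hUdef
  set lam : Fin d → ℝ := hpsd.1.eigenvalues with hlamdef
  have hUU : Uᴴ * U = 1 := by
    have h2 := Unitary.coe_star_mul_self (hpsd.1.eigenvectorUnitary)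
    rw [Matrix.star_eq_conjTranspose] at h2
    exact h2
  have hUU' : U * Uᴴ = 1 := by
    have h2 := Unitary.coe_mul_star_self (hpsd.1.eigenvectorUnitary)
    simp only [Unitary.coe_star, Matrix.star_eq_conjTranspose] at h2
    exact h2
  have hsp : Mᴴ * M = U * Matrix.diagonal (fun i => (lam i : ℂ)) * Uᴴ := by
    have h1 := hpsd.1.spectral_theorem
    rw [Unitary.conjStarAlgAut_apply] at h1
    rw [← Matrix.star_eq_conjTranspose]
    exact h1
  have htn : traceNorm M = ∑ i, Real.sqrt (lam i) := by
    show ((Matrix.posSemidef_conjTranspose_mul_self M).1.eigenvectorUnitary.1 *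
      Matrix.diagonal (((↑) : ℝ → ℂ) ∘ Real.sqrt ∘
        (Matrix.posSemidef_conjTranspose_mul_self M).1.eigenvalues) *
      (star (Matrix.posSemidef_conjTranspose_mul_self M).1.eigenvectorUnitary :
        Matrix (Fin d) (Fin d) ℂ)).trace.re = _
    rw [Subsingleton.elim (Matrix.posSemidef_conjTranspose_mul_self M) hpsd]
    rw [Matrix.trace_mul_cycle]
    rw [show ((star hpsd.1.eigenvectorUnitary : Matrix (Fin d) (Fin d) ℂ))
        * (hpsd.1.eigenvectorUnitary.1) = 1 from Unitary.coe_star_mul_self _]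
    rw [one_mul, trace_diagonal, Complex.re_sum]
    simp [Function.comp, hlamdef]
  have hkey := GentleAux.key_lemma M U lam (fun i => hpsd.eigenvalues_nonneg i) hUU hUU' hsp
    (S * Q) S (S * P) (S * Q) (by rw [hM]; exact hdec)
  rw [htn]
  refine hkey.trans ?_
  have b1 : Real.sqrt (((S * Q)ᴴ * (S * Q)).trace.re) ≤ Real.sqrt ε := by
    refine Real.sqrt_le_sqrt ?_
    rw [htQ]; exact hQle
  have b2 : Real.sqrt ((Sᴴ * S).trace.re) = 1 := by rw [hStr, Real.sqrt_one]
  have b3 : Real.sqrt (((S * P)ᴴ * (S * P)).trace.re) ≤ 1 := by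
    rw [htP]; exact Real.sqrt_le_one.mpr hPle
  have hsq : 0 ≤ Real.sqrt ε := Real.sqrt_nonneg ε
  have t1 : Real.sqrt (((S * Q)ᴴ * (S * Q)).trace.re) * Real.sqrt ((Sᴴ * S).trace.re)
      ≤ Real.sqrt ε := by
    rw [b2, mul_one]; exact b1
  have t2 : Real.sqrt (((S * P)ᴴ * (S * P)).trace.re) * Real.sqrt (((S * Q)ᴴ * (S * Q)).trace.re)
      ≤ Real.sqrt ε := by
    calc _ ≤ 1 * Real.sqrt ε := mul_le_mul b3 b1 (Real.sqrt_nonneg _) zero_le_one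
    _ = Real.sqrt ε := one_mul _
  linarith
end

section
/- Hayashi–Nagaoka operator inequality: for operators S, T on a finite-dimensional Hilbert space with 0 ≤ S ≤ I and T ≥ 0, one has I − (S + T)^{-1/2} S (S + T)^{-1/2} ≤ 2(I − S) + 4T, where (S+T)^{-1/2} denotes the square root of the generalized (Moore–Penrose) inverse of S + T. -/
open scoped ComplexOrder
open Matrix

/-- `W` is the Moore–Penrose (generalized) inverse of `R`. -/
def IsMoorePenroseInv {d : ℕ} (R W : Matrix (Fin d) (Fin d) ℂ) : Prop :=
  R * W * R = R ∧ W * R * W = W ∧ (R * W)ᴴ = R * W ∧ (W * R)ᴴ = W * R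

-- Auxiliary lemmas

lemma hn_mp_unique {n : Type*} [Fintype n] [DecidableEq n] {A B C : Matrix n n ℂ}
    (h1 : A*B*A = A) (h2 : B*A*B = B) (h3 : (A*B)ᴴ = A*B) (h4 : (B*A)ᴴ = B*A)
    (g1 : A*C*A = A) (g2 : C*A*C = C) (g3 : (A*C)ᴴ = A*C) (g4 : (C*A)ᴴ = C*A) :
    B = C := by
  have e0 : Aᴴ = Aᴴ*(A*C) := by
    conv_lhs => rw [← g1]
    rw [conjTranspose_mul, g3]
  have e0' : Aᴴ = (C*A)*Aᴴ := by
    conv_lhs => rw [← g1, mul_assoc]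
    rw [conjTranspose_mul, g4]
  have hab : A*B = A*C := by
    calc A*B = Bᴴ*Aᴴ := by rw [← conjTranspose_mul, h3]
    _ = Bᴴ*(Aᴴ*(A*C)) := by conv_lhs => rw [e0]
    _ = (Bᴴ*Aᴴ)*(A*C) := by rw [mul_assoc]
    _ = (A*B)*(A*C) := by rw [← conjTranspose_mul, h3]
    _ = A*C := by rw [← mul_assoc, h1]
  have hba : B*A = C*A := by
    calc B*A = Aᴴ*Bᴴ := by rw [← conjTranspose_mul, h4]
    _ = ((C*A)*Aᴴ)*Bᴴ := by conv_lhs => rw [e0']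
    _ = (C*A)*(Aᴴ*Bᴴ) := by rw [mul_assoc]
    _ = (C*A)*(B*A) := by rw [← conjTranspose_mul, h4]
    _ = C*A := by rw [mul_assoc, ← mul_assoc A B A, h1]
  calc B = B*A*B := h2.symm
  _ = (C*A)*B := by rw [hba]
  _ = C*(A*B) := by rw [mul_assoc]
  _ = C*(A*C) := by rw [hab]
  _ = C*A*C := by rw [mul_assoc]
  _ = C := g2

lemma hn_sub_posSemidef {𝕜 : Type*} [RCLike 𝕜] {n : Type*} [Fintype n] [DecidableEq n]
    {A B : Matrix n n 𝕜}
    (hA : A.PosSemidef) (hB : B.PosSemidef) (h : (A * A - B * B).PosSemidef) :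
    (A - B).PosSemidef := by
  have hH : (A - B).IsHermitian := hA.1.sub hB.1
  refine hH.posSemidef_iff_eigenvalues_nonneg.mpr fun i => ?_
  by_contra hti
  push_neg at hti
  rw [Pi.zero_apply] at hti
  set t : ℝ := hH.eigenvalues i with hts
  set v : n → 𝕜 := ⇑(hH.eigenvectorBasis i) with hvs
  have hv0 : v ≠ 0 := by
    have := hH.eigenvectorBasis.orthonormal.ne_zero i
    simpa [hvs] using this
  have hv' : (A - B) *ᵥ v = (t : ℝ) • v := hH.mulVec_eigenvectorBasis i
  have h_sum : star v ⬝ᵥ (A*A - B*B) *ᵥ v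
      = (t:𝕜) * (star v ⬝ᵥ A *ᵥ v + star v ⬝ᵥ B *ᵥ v) := by
    calc star v ⬝ᵥ (A*A - B*B) *ᵥ v
        = star v ⬝ᵥ A *ᵥ (A - B) *ᵥ v + star v ⬝ᵥ (A - B) *ᵥ B *ᵥ v := by
          rw [mulVec_mulVec, mulVec_mulVec, ← dotProduct_add, ← add_mulVec, mul_sub, sub_mul,
            add_sub, sub_add_cancel]
    _ = (t:𝕜) * (star v ⬝ᵥ A *ᵥ v) + (star v) ᵥ* (A - B)ᴴ ⬝ᵥ B *ᵥ v := by
          rw [hv', mulVec_smul, dotProduct_smul, RCLike.real_smul_eq_coe_mul,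
            dotProduct_mulVec _ (A - B), hH]
    _ = (t:𝕜) * (star v ⬝ᵥ A *ᵥ v + star v ⬝ᵥ B *ᵥ v) := by
          simp_rw [← star_mulVec, hv', mul_add, ← RCLike.real_smul_eq_coe_mul, ← smul_dotProduct]
          congr 2 with j
          simp only [Pi.star_apply, Pi.smul_apply, RCLike.real_smul_eq_coe_mul, star_mul',
            RCLike.star_def, RCLike.conj_ofReal]
  have hx : 0 ≤ star v ⬝ᵥ A *ᵥ v := hA.dotProduct_mulVec_nonneg v
  have hy : 0 ≤ star v ⬝ᵥ B *ᵥ v := hB.dotProduct_mulVec_nonneg v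
  have hpos : 0 ≤ (t:𝕜) * (star v ⬝ᵥ A *ᵥ v + star v ⬝ᵥ B *ᵥ v) := h_sum ▸ h.dotProduct_mulVec_nonneg v
  set z : 𝕜 := star v ⬝ᵥ A *ᵥ v + star v ⬝ᵥ B *ᵥ v with hzs
  have hz : 0 ≤ z := add_nonneg hx hy
  obtain ⟨hre, him⟩ := RCLike.nonneg_iff.mp hz
  have h2 : 0 ≤ RCLike.re ((t:𝕜) * z) := (RCLike.nonneg_iff.mp hpos).1
  rw [RCLike.mul_re, RCLike.ofReal_re, RCLike.ofReal_im, him, mul_zero, sub_zero] at h2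
  have hrez : RCLike.re z = 0 := by nlinarith
  have hz0 : z = 0 := by
    apply RCLike.ext <;> simp [hrez, him]
  have hX : star v ⬝ᵥ A *ᵥ v = 0 := by
    have h1 : star v ⬝ᵥ A *ᵥ v = - (star v ⬝ᵥ B *ᵥ v) := by
      rw [eq_neg_iff_add_eq_zero]; exact hzs ▸ hz0
    exact le_antisymm (h1 ▸ neg_nonpos_of_nonneg hy) hx
  have hY : star v ⬝ᵥ B *ᵥ v = 0 := by
    have h5 := hz0; rw [hzs, hX, zero_add] at h5; exact h5
  have aux : star v ⬝ᵥ (A - B) *ᵥ v = 0 := by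
    rw [sub_mulVec, dotProduct_sub, hX, hY, sub_zero]
  rw [hv', dotProduct_smul, RCLike.real_smul_eq_coe_mul, ← mul_zero (t:𝕜)] at aux
  exact hv0 <| dotProduct_star_self_eq_zero.mp <| mul_left_cancel₀
    (RCLike.ofReal_ne_zero.mpr hti.ne) aux


/-- Hayashi–Nagaoka operator inequality: if `0 ≤ S ≤ I`, `0 ≤ T`,
`R` is the positive square root of `S + T`, and `W` is the Moore–Penrose
inverse of `R` (so that `W = (S+T)^{-1/2}` on the support of `S+T`), then
`I - W S W ≤ 2(I - S) + 4T` in the Loewner order. -/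
theorem hayashi_nagaoka {d : ℕ} (S T R W : Matrix (Fin d) (Fin d) ℂ)
    (hS0 : S.PosSemidef) (hS1 : (1 - S).PosSemidef) (hT : T.PosSemidef)
    (hR : R.PosSemidef) (hRsq : R * R = S + T)
    (hW : IsMoorePenroseInv R W) :
    (2 • (1 - S) + 4 • T - (1 - W * S * W)).PosSemidef := by
  obtain ⟨hRWR, hWRW, hRWh, hWRh⟩ := hW
  have hRh : Rᴴ = R := hR.1
  -- W is Hermitian
  have hWHR : R * Wᴴ * R = R := by
    have h5 := congrArg conjTranspose hRWR
    simpa [conjTranspose_mul, hRh, mul_assoc] using h5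
  have hWHRWH : Wᴴ * R * Wᴴ = Wᴴ := by
    have h5 := congrArg conjTranspose hWRW
    simpa [conjTranspose_mul, hRh, mul_assoc] using h5
  have hRWH : R * Wᴴ = W * R := by
    calc R * Wᴴ = (W * Rᴴ)ᴴ := by rw [conjTranspose_mul, conjTranspose_conjTranspose]
    _ = (W * R)ᴴ := by rw [hRh]
    _ = W * R := hWRh
  have hWHRe : Wᴴ * R = R * W := by
    calc Wᴴ * R = (Rᴴ * W)ᴴ := by rw [conjTranspose_mul, conjTranspose_conjTranspose]
    _ = (R * W)ᴴ := by rw [hRh]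
    _ = R * W := hRWh
  have hWh : Wᴴ = W := by
    refine hn_mp_unique (A := R) hWHR hWHRWH ?_ ?_ hRWR hWRW hRWh hWRh
    · rw [hRWH]; exact hWRh
    · rw [hWHRe]; exact hRWh
  have hc : R * W = W * R := by rw [← hRWH, hWh]
  -- algebraic consequences
  have hMW : (S + T) * W = R := by
    rw [← hRsq, mul_assoc, hc, ← mul_assoc, hRWR]
  have hWM : W * (S + T) = R := by
    rw [← hRsq, ← mul_assoc, ← hc, hRWR]
  have hTW : T * W = R - S * W := by
    rw [eq_sub_iff_add_eq, ← add_mul, add_comm T S]; exact hMW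
  have hWT : W * T = R - W * S := by
    rw [eq_sub_iff_add_eq, ← mul_add, add_comm T S]; exact hWM
  -- the four PSD summands
  have pE1 : ((1 - W)ᴴ * S * (1 - W)).PosSemidef := hS0.conjTranspose_mul_mul_same _
  have pE2 : ((1 - (2⁻¹:ℂ) • W)ᴴ * T * (1 - (2⁻¹:ℂ) • W)).PosSemidef :=
    hT.conjTranspose_mul_mul_same _
  have pE3 : (1 - R * W).PosSemidef := by
    have h1 : (1 - R*W)ᴴ = 1 - R*W := by
      rw [conjTranspose_sub, conjTranspose_one, hRWh]
    have hPP : (R*W)*(R*W) = R*W := by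
      calc (R*W)*(R*W) = R*(W*R*W) := by rw [mul_assoc, ← mul_assoc W R W]
      _ = R*W := by rw [hWRW]
    have h2 : (1 - R*W)ᴴ * (1 - R*W) = 1 - R*W := by
      rw [h1]
      simp only [mul_sub, sub_mul, mul_one, one_mul, hPP]
      abel
    rw [← h2]; exact posSemidef_conjTranspose_mul_self _
  have pE4 : (R - S).PosSemidef := by
    apply hn_sub_posSemidef hR hS0
    obtain ⟨Q, hQ, hQh⟩ : ∃ Q : Matrix (Fin d) (Fin d) ℂ, Q * Q = S ∧ Qᴴ = Q := by
      open scoped MatrixOrder in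
      exact ⟨CFC.sqrt S, CFC.sqrt_mul_sqrt_self S hS0.nonneg, (CFC.sqrt_nonneg S).posSemidef.1⟩
    have hQSQ : Q*S*Q = S*S := by rw [← hQ]; noncomm_ring
    have h5 : R * R - S * S = T + Qᴴ * (1 - S) * Q := by
      rw [hRsq, hQh, mul_sub, mul_one, sub_mul, hQ, hQSQ]
      abel
    rw [h5]
    exact hT.add (hS1.conjTranspose_mul_mul_same Q)
  -- the certificate identity
  have e1 : (1 - W)ᴴ = 1 - W := by rw [conjTranspose_sub, conjTranspose_one, hWh]
  have e2 : (1 - (2⁻¹:ℂ) • W)ᴴ = 1 - (2⁻¹:ℂ) • W := by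
    rw [conjTranspose_sub, conjTranspose_one, conjTranspose_smul, hWh]
    norm_num
  have key : 2 • (1 - S) + 4 • T - (1 - W * S * W) =
      ((1 - W)ᴴ * S * (1 - W) + (1 - W)ᴴ * S * (1 - W))
      + ((1 - (2⁻¹:ℂ) • W)ᴴ * T * (1 - (2⁻¹:ℂ) • W)
        + (1 - (2⁻¹:ℂ) • W)ᴴ * T * (1 - (2⁻¹:ℂ) • W)
        + (1 - (2⁻¹:ℂ) • W)ᴴ * T * (1 - (2⁻¹:ℂ) • W)
        + (1 - (2⁻¹:ℂ) • W)ᴴ * T * (1 - (2⁻¹:ℂ) • W))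
      + (1 - R * W)
      + ((R - S) + (R - S) + (R - S) + (R - S)) := by
    rw [e1, e2]
    simp only [mul_sub, sub_mul, mul_one, one_mul, smul_mul_assoc, mul_smul_comm, smul_smul,
      smul_sub]
    rw [hWT, hTW]
    simp only [sub_mul, mul_sub, smul_sub]
    module
  rw [key]
  exact (((pE1.add pE1).add (((pE2.add pE2).add pE2).add pE2)).add pE3).add
    (((pE4.add pE4).add pE4).add pE4)
end

section
/- Let G_I ∈ Fq^{k×n}, G_{O/I} ∈ Fq^{l×n}, B₂, B₃ ∈ Fqⁿ all be independent and uniformly random. Define V₂(a₂,m₂) = a₂G_I + m₂G_{O/I} + B₂, V₃(a₃,m₃) = a₃G_I + m₃G_{O/I} + B₃, and U(a,l) = aG_I + lG_{O/I} + B₂ + B₃. Then for any (a₂,m₂), (a₃,m₃), and (a,l) with a ≠ a₂+a₃ and l ≠ m₂+m₃, and any fixed vectors v₂, v₃, u ∈ Fqⁿ, P(V₂(a₂,m₂)=v₂, V₃(a₃,m₃)=v₃, U(a,l)=u) = q^{-3n}. -/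
open Matrix Finset

section aux

variable {G H : Type*} [AddCommGroup G] [AddCommGroup H] [Fintype G] [Fintype H]
  [DecidableEq H]

private lemma fiber_card_eq_zero_fiber' (f : G →+ H) (h : H) (g₀ : G) (hg₀ : f g₀ = h) :
    (univ.filter fun g => f g = h).card = (univ.filter fun g => f g = 0).card := by
  apply Finset.card_bij' (fun g _ => g - g₀) (fun g _ => g + g₀)
  · intro g hg
    simp only [mem_filter, mem_univ, true_and] at hg ⊢
    simp [map_sub, hg, hg₀]
  · intro g hg
    simp only [mem_filter, mem_univ, true_and] at hg ⊢
    simp [map_add, hg, hg₀]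
  · intro g _; abel
  · intro g _; abel

private lemma fiber_card_mul' (f : G →+ H) (hf : Function.Surjective f) (h : H) :
    (univ.filter fun g => f g = h).card * Fintype.card H = Fintype.card G := by
  have key : ∀ h' : H, (univ.filter fun g => f g = h').card
      = (univ.filter fun g => f g = h).card := by
    intro h'
    obtain ⟨g₀, hg₀⟩ := hf h'
    obtain ⟨g₁, hg₁⟩ := hf h
    rw [fiber_card_eq_zero_fiber' f h' g₀ hg₀, fiber_card_eq_zero_fiber' f h g₁ hg₁]
  have hcard : (Finset.univ : Finset G).card
      = ∑ h' : H, (univ.filter fun g => f g = h').card :=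
    Finset.card_eq_sum_card_fiberwise (fun g _ => Finset.mem_univ (f g))
  rw [Finset.card_univ] at hcard
  rw [hcard]
  simp [key, mul_comm]

end aux

/-- With `G_I ∈ Fq^{k×n}`, `G_{O/I} ∈ Fq^{l×n}`, `B₂, B₃ ∈ Fqⁿ` all independent
and uniform, and `V₂(a₂,m₂) = a₂G_I + m₂G_{O/I} + B₂`,
`V₃(a₃,m₃) = a₃G_I + m₃G_{O/I} + B₃`, `U(a,l) = aG_I + lG_{O/I} + B₂ + B₃`:
whenever `a ≠ a₂ + a₃` and `l ≠ m₂ + m₃`, for any fixed `v₂, v₃, u`,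
`P(V₂ = v₂, V₃ = v₃, U = u) = q^{-3n}`. -/
theorem nested_coset_three_terms {F : Type*} [Field F] [Fintype F] [DecidableEq F]
    {k l n : ℕ} (q : ℕ) (hq : q = Fintype.card F)
    (a₂ a₃ a : Fin k → F) (m₂ m₃ m : Fin l → F)
    (ha : a ≠ a₂ + a₃) (hm : m ≠ m₂ + m₃)
    (v₂ v₃ u : Fin n → F) :
    ((Finset.univ.filter
        (fun w : Matrix (Fin k) (Fin n) F × Matrix (Fin l) (Fin n) F
            × (Fin n → F) × (Fin n → F) =>
          vecMul a₂ w.1 + vecMul m₂ w.2.1 + w.2.2.1 = v₂ ∧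
          vecMul a₃ w.1 + vecMul m₃ w.2.1 + w.2.2.2 = v₃ ∧
          vecMul a w.1 + vecMul m w.2.1 + w.2.2.1 + w.2.2.2 = u)).card : ℚ)
      / (Fintype.card (Matrix (Fin k) (Fin n) F × Matrix (Fin l) (Fin n) F
            × (Fin n → F) × (Fin n → F)) : ℚ)
      = 1 / (q : ℚ) ^ (3 * n) := by
  classical
  set x : Fin k → F := a - (a₂ + a₃) with hx
  set y : Fin l → F := m - (m₂ + m₃) with hy
  have hx0 : x ≠ 0 := sub_ne_zero.mpr ha
  obtain ⟨i₀, hi₀⟩ : ∃ i, x i ≠ 0 := by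
    by_contra h
    push_neg at h
    exact hx0 (funext h)
  -- the additive hom on pairs
  set f : (Matrix (Fin k) (Fin n) F × Matrix (Fin l) (Fin n) F) →+ (Fin n → F) :=
    { toFun := fun w => vecMul x w.1 + vecMul y w.2
      map_zero' := by simp
      map_add' := by
        intro w₁ w₂
        simp [Matrix.vecMul_add]
        abel } with hf
  have hfsurj : Function.Surjective f := by
    intro c
    refine ⟨(Matrix.of fun i j => if i = i₀ then (x i₀)⁻¹ * c j else 0, 0), ?_⟩
    funext j
    simp only [hf, AddMonoidHom.coe_mk, ZeroHom.coe_mk, Matrix.vecMul_zero, add_zero]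
    show (vecMul x _) j = c j
    simp only [Matrix.vecMul, dotProduct, Matrix.of_apply]
    rw [Finset.sum_eq_single i₀]
    · rw [if_pos rfl]; field_simp
    · intro b _ hb; simp [hb]
    · simp
  -- identify the filtered set with a fiber of f
  have hcard : (Finset.univ.filter
        (fun w : Matrix (Fin k) (Fin n) F × Matrix (Fin l) (Fin n) F
            × (Fin n → F) × (Fin n → F) =>
          vecMul a₂ w.1 + vecMul m₂ w.2.1 + w.2.2.1 = v₂ ∧
          vecMul a₃ w.1 + vecMul m₃ w.2.1 + w.2.2.2 = v₃ ∧
          vecMul a w.1 + vecMul m w.2.1 + w.2.2.1 + w.2.2.2 = u)).card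
      = (univ.filter fun p : Matrix (Fin k) (Fin n) F × Matrix (Fin l) (Fin n) F =>
          f p = u - v₂ - v₃).card := by
    refine Finset.card_bij' (fun w _ => (w.1, w.2.1))
      (fun p _ => (p.1, p.2, v₂ - (vecMul a₂ p.1 + vecMul m₂ p.2),
        v₃ - (vecMul a₃ p.1 + vecMul m₃ p.2))) ?_ ?_ ?_ ?_
    case _ =>
      intro w hw
      simp only [mem_filter, mem_univ, true_and] at hw ⊢
      obtain ⟨h1, h2, h3⟩ := hw
      simp only [hf, AddMonoidHom.coe_mk, ZeroHom.coe_mk, hx, hy,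
        Matrix.sub_vecMul, Matrix.add_vecMul]
      linear_combination h3 - h1 - h2
    case _ =>
      intro p hp
      simp only [mem_filter, mem_univ, true_and] at hp ⊢
      simp only [hf, AddMonoidHom.coe_mk, ZeroHom.coe_mk, hx, hy,
        Matrix.sub_vecMul, Matrix.add_vecMul] at hp
      refine ⟨by ring, by ring, by linear_combination hp⟩
    case _ =>
      intro w hw
      obtain ⟨G, Hm, b₂, b₃⟩ := w
      simp only [mem_filter, mem_univ, true_and] at hw
      obtain ⟨h1, h2, _⟩ := hw
      simp only [Prod.mk.injEq]
      exact ⟨trivial, trivial, by linear_combination -h1, by linear_combination -h2⟩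
    case _ =>
      intro p _
      rfl
  have hfiber := fiber_card_mul' f hfsurj (u - v₂ - v₃)
  set N := (univ.filter fun p : Matrix (Fin k) (Fin n) F × Matrix (Fin l) (Fin n) F =>
          f p = u - v₂ - v₃).card with hN
  rw [hcard]
  have hΩ : Fintype.card (Matrix (Fin k) (Fin n) F × Matrix (Fin l) (Fin n) F
            × (Fin n → F) × (Fin n → F))
      = N * Fintype.card F ^ (3 * n) := by
    have hFn : Fintype.card (Fin n → F) = Fintype.card F ^ n := by simp
    calc Fintype.card (Matrix (Fin k) (Fin n) F × Matrix (Fin l) (Fin n) F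
            × (Fin n → F) × (Fin n → F))
        = Fintype.card (Matrix (Fin k) (Fin n) F × Matrix (Fin l) (Fin n) F)
          * (Fintype.card F ^ n * Fintype.card F ^ n) := by
          simp [Fintype.card_prod, hFn, mul_assoc]
      _ = (N * Fintype.card F ^ n) * (Fintype.card F ^ n * Fintype.card F ^ n) := by
          rw [← hfiber, hFn]
      _ = N * Fintype.card F ^ (3 * n) := by rw [show 3*n = n+(n+n) by ring, pow_add, pow_add]; ring
  have hN0 : N ≠ 0 := by
    intro h0
    have := Fintype.card_pos (α := Matrix (Fin k) (Fin n) F × Matrix (Fin l) (Fin n) F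
            × (Fin n → F) × (Fin n → F))
    rw [hΩ, h0, zero_mul] at this
    exact lt_irrefl 0 this
  have h2 : (N : ℚ) ≠ 0 := Nat.cast_ne_zero.mpr hN0
  rw [hΩ, hq, Nat.cast_mul, Nat.cast_pow, div_mul_eq_div_div, div_self h2]
end
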